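/- Let X, Y, Z be n×n Hermitian matrices with e^{iZ} = e^{iX} e^{iY} and ‖Z‖ < π. If there exists r ∈ [0,1] such that λ_k(X) = r·λ_k(Z) and λ_k(Y) = (1−r)·λ_k(Z) for every k = 1, …, n (eigenvalues arranged in non-increasing order), then X = rZ and Y = (1−r)Z. -/

import Mathlib

open Matrix
open scoped ComplexOrder

noncomputable section

/-- The positive semidefinite square root of a positive semidefinite matrix
(the definition Mathlib had in December 2024, since removed) -/
noncomputable def Matrix.PosSemidef.sqrt {m : Type*} [Fintype m] [DecidableEq m]
    {A : Matrix m m ℂ} (hA : A.PosSemidef) : Matrix m m ℂ :=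
  hA.1.eigenvectorUnitary.1 * diagonal ((↑) ∘ (√·) ∘ hA.1.eigenvalues) *
  (star hA.1.eigenvectorUnitary : Matrix m m ℂ)

theorem Matrix.PosSemidef.posSemidef_sqrt {m : Type*} [Fintype m] [DecidableEq m]
    {A : Matrix m m ℂ} (hA : A.PosSemidef) : PosSemidef hA.sqrt := by
  apply PosSemidef.mul_mul_conjTranspose_same
  refine posSemidef_diagonal_iff.mpr fun i ↦ ?_
  exact Complex.zero_le_real.mpr (Real.sqrt_nonneg _)

/-- n×n complex matrices -/
abbrev Mat (n : ℕ) := Matrix (Fin n) (Fin n) ℂ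

/-- modulus |A| = sqrt (Aᴴ A) -/
noncomputable def matAbs {n : ℕ} (A : Mat n) : Mat n :=
  (Matrix.posSemidef_conjTranspose_mul_self A).sqrt

/-- spectral (operator) norm -/
noncomputable def specNorm {n : ℕ} (A : Mat n) : ℝ :=
  ‖Matrix.toEuclideanCLM (𝕜 := ℂ) (n := Fin n) A‖

/-- Löwner order: `A ≤ B` iff `B - A` is positive semidefinite -/
def loewnerLE {n : ℕ} (A B : Mat n) : Prop := (B - A).PosSemidef

/-- singular values of `A`, arranged in non-increasing order -/
noncomputable def sval {n : ℕ} (A : Mat n) : Fin n → ℝ :=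
  fun i =>
    let e := ((Matrix.posSemidef_conjTranspose_mul_self A).posSemidef_sqrt).1.eigenvalues
    (e ∘ Tuple.sort e) i.rev

/-- singular values indexed by naturals (0 beyond the size) -/
noncomputable def svalNat {n : ℕ} (A : Mat n) (k : ℕ) : ℝ :=
  if h : k < n then sval A ⟨k, h⟩ else 0

/-- eigenvalues of a Hermitian matrix, arranged in non-increasing order -/
noncomputable def eigsDesc {n : ℕ} {A : Mat n} (hA : A.IsHermitian) : Fin n → ℝ :=
  fun i => (hA.eigenvalues ∘ Tuple.sort hA.eigenvalues) i.rev

/-!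
Conjugating by a unitary that diagonalises `Z`, we may assume `Z = diag d`. Let `λ = d i₀` be
the largest entry and `e = e_{i₀}`, so that `e^{iX} e^{iY} e = e^{iλ} e`. In the eigenbases of `X`
and `Y`, the identity `⟨e, e^{iY} e⟩ = e^{iλ} ⟨e, e^{-iX} e⟩` equates a convex combination of the
points `e^{i(λ - μ)}` (`μ` an eigenvalue of `X`, so `μ ∈ [-rπ, rλ]`) with one of the points
`e^{iν}` (`ν` an eigenvalue of `Y`, so `ν ∈ [-(1-r)π, (1-r)λ]`). These points lie on two arcs of
total length `λ + π < 2π` meeting only at `e^{i(1-r)λ}`, so both combinations are concentrated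
there: `X e = rλ e` and `Y e = (1-r)λ e`. Hence `X`, `Y` and `Z` all split off the line through
`e`, and we conclude by induction on the dimension.
-/

open scoped Real
open Complex (I normSq)

lemma eq_zero_of_sum_eq_sum_of_nonneg_of_nonpos {ι κ : Type*} [Fintype ι] [Fintype κ]
    {f : ι → ℝ} {g : κ → ℝ} (hf : ∀ i, 0 ≤ f i) (hg : ∀ k, g k ≤ 0)
    (h : ∑ i, f i = ∑ k, g k) : (∀ i, f i = 0) ∧ ∀ k, g k = 0 := by
  have hf0 : ∑ i, f i = 0 :=
    le_antisymm (h ▸ Finset.sum_nonpos fun k _ ↦ hg k) (Finset.sum_nonneg fun i _ ↦ hf i)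
  exact ⟨fun i ↦ (Finset.sum_eq_zero_iff_of_nonneg fun i _ ↦ hf i).mp hf0 i (Finset.mem_univ i),
    fun k ↦ (Finset.sum_eq_zero_iff_of_nonpos fun k _ ↦ hg k).mp (h ▸ hf0) k (Finset.mem_univ k)⟩

namespace Real

lemma cos_le_cos_of_abs_le {x s : ℝ} (hs : s ≤ π) (hx : |x| ≤ s) : cos s ≤ cos x := by
  rw [← cos_abs x]
  exact cos_le_cos_of_nonneg_of_le_pi (abs_nonneg x) hs hx

lemma abs_eq_of_cos_eq {x s : ℝ} (hs : s ≤ π) (hx : |x| ≤ s) (h : cos x = cos s) : |x| = s := by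
  by_contra hne
  have := cos_lt_cos_of_nonneg_of_le_pi (abs_nonneg x) hs (hx.lt_of_ne hne)
  rw [cos_abs, h] at this
  exact this.false

end Real

lemma Complex.re_exp_neg_mul_ofReal_mul_exp (c a φ : ℝ) :
    (exp (-(c * I)) * (a * exp (φ * I))).re = a * Real.cos (φ - c) := by
  rw [mul_left_comm, ← exp_add, show -(c * I) + φ * I = ((φ - c : ℝ) : ℂ) * I by push_cast; ring,
    re_ofReal_mul, exp_ofReal_mul_I_re]

theorem eq_of_sum_exp_eq_sum_exp {ι κ : Type*} [Fintype ι] [Fintype κ]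
    {p φ : ι → ℝ} {q ψ : κ → ℝ} {θ α β : ℝ} (hα : 0 ≤ α) (hβ : 0 ≤ β) (hαβ : α + β < 2 * π)
    (hp : ∀ i, 0 ≤ p i) (hq : ∀ k, 0 ≤ q k) (hpq : ∑ i, p i = ∑ k, q k)
    (hφ : ∀ i, φ i ∈ Set.Icc θ (θ + α)) (hψ : ∀ k, ψ k ∈ Set.Icc (θ - β) θ)
    (h : ∑ i, (p i : ℂ) * Complex.exp (φ i * I) = ∑ k, (q k : ℂ) * Complex.exp (ψ k * I)) :
    (∀ i, p i ≠ 0 → φ i = θ) ∧ ∀ k, q k ≠ 0 → ψ k = θ := by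
  -- the line `Re (e^{-ic} z) = cos s` separates the two arcs, touching them only at `θ`
  set s := (α + 2 * π - β) / 4 with hs
  set c := θ + s with hc
  have hre : ∑ i, p i * Real.cos (φ i - c) = ∑ k, q k * Real.cos (ψ k - c) := by
    simpa only [Finset.mul_sum, Complex.re_sum, Complex.re_exp_neg_mul_ofReal_mul_exp]
      using congrArg (fun z ↦ (Complex.exp (-(c * I)) * z).re) h
  have hφs : ∀ i, |φ i - c| ≤ s :=
    fun i ↦ abs_le.mpr ⟨by linarith [(hφ i).1], by linarith [(hφ i).2]⟩
  have hψs : ∀ k, |ψ k - c + π| ≤ π - s :=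
    fun k ↦ abs_le.mpr ⟨by linarith [(hψ k).1], by linarith [(hψ k).2]⟩
  have hcosψ : ∀ k, Real.cos (ψ k - c) = -Real.cos (ψ k - c + π) := fun k ↦ by
    rw [Real.cos_add_pi, neg_neg]
  have hcos_s : Real.cos (π - s) = -Real.cos s := Real.cos_pi_sub s
  obtain ⟨hP, hQ⟩ := eq_zero_of_sum_eq_sum_of_nonneg_of_nonpos
    (f := fun i ↦ p i * (Real.cos (φ i - c) - Real.cos s))
    (g := fun k ↦ q k * (Real.cos (ψ k - c) - Real.cos s))
    (fun i ↦ mul_nonneg (hp i) (sub_nonneg.2 (Real.cos_le_cos_of_abs_le (by linarith) (hφs i))))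
    (fun k ↦ mul_nonpos_of_nonneg_of_nonpos (hq k) (by
      have := Real.cos_le_cos_of_abs_le (by linarith) (hψs k)
      linarith [hcosψ k]))
    (by simp only [mul_sub, Finset.sum_sub_distrib, ← Finset.sum_mul, hre, hpq])
  refine ⟨fun i hi ↦ ?_, fun k hk ↦ ?_⟩
  · have hcos := sub_eq_zero.mp ((mul_eq_zero.mp (hP i)).resolve_left hi)
    rcases abs_eq (by linarith) |>.mp (Real.abs_eq_of_cos_eq (by linarith) (hφs i) hcos)
      with h' | h'
    · linarith [(hφ i).2]
    · linarith
  · have hcos := sub_eq_zero.mp ((mul_eq_zero.mp (hQ k)).resolve_left hk)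
    rcases abs_eq (by linarith) |>.mp
      (Real.abs_eq_of_cos_eq (by linarith) (hψs k) (by linarith [hcosψ k])) with h' | h'
    · linarith
    · linarith [(hψ k).1]

section Hermitian

variable {n : Type*} [Fintype n] [DecidableEq n]

open Unitary

lemma Matrix.exp_conjStarAlgAut (u : unitary (Matrix n n ℂ)) (A : Matrix n n ℂ) :
    NormedSpace.exp (conjStarAlgAut ℂ _ u A) = conjStarAlgAut ℂ _ u (NormedSpace.exp A) := by
  simpa using Matrix.exp_units_conj (toUnits u) A

lemma Matrix.IsHermitian.exp_smul {A : Matrix n n ℂ} (hA : A.IsHermitian) (t : ℂ) :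
    NormedSpace.exp (t • A) = conjStarAlgAut ℂ _ hA.eigenvectorUnitary
      (diagonal fun k ↦ Complex.exp (hA.eigenvalues k * t)) := by
  conv_lhs => rw [hA.spectral_theorem, ← map_smul, exp_conjStarAlgAut, ← diagonal_smul,
    exp_diagonal]
  congr 2
  funext k
  simp [Complex.exp_eq_exp_ℂ, mul_comm]

lemma Matrix.star_dotProduct_conjStarAlgAut_diagonal_mulVec (u : unitary (Matrix n n ℂ))
    (g : n → ℂ) (v : n → ℂ) :
    star v ⬝ᵥ (conjStarAlgAut ℂ _ u (diagonal g) *ᵥ v)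
      = ∑ k, (normSq ((star (u : Matrix n n ℂ) *ᵥ v) k) : ℂ) * g k := by
  set a := star (u : Matrix n n ℂ) *ᵥ v
  have ha : star a = star v ᵥ* (u : Matrix n n ℂ) := by
    rw [star_mulVec, star_eq_conjTranspose, conjTranspose_conjTranspose]
  rw [conjStarAlgAut_apply, ← mulVec_mulVec, ← mulVec_mulVec, dotProduct_mulVec, ← ha]
  simp only [dotProduct, mulVec_diagonal, Pi.star_apply, Complex.normSq_eq_conj_mul_self,
    Complex.star_def]
  exact Finset.sum_congr rfl fun k _ ↦ by ring

lemma Matrix.IsHermitian.mulVec_eq_smul_of_eigenvalues_eq {A : Matrix n n ℂ} (hA : A.IsHermitian)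
    {v : n → ℂ} {c : ℝ}
    (h : ∀ k, (star (hA.eigenvectorUnitary : Matrix n n ℂ) *ᵥ v) k ≠ 0 → hA.eigenvalues k = c) :
    A *ᵥ v = (c : ℂ) • v := by
  set U : Matrix n n ℂ := ↑hA.eigenvectorUnitary
  have hdiag : diagonal (RCLike.ofReal ∘ hA.eigenvalues) *ᵥ (star U *ᵥ v)
      = (c : ℂ) • (star U *ᵥ v) := by
    funext k
    by_cases hk : (star U *ᵥ v) k = 0
    · simp [mulVec_diagonal, hk]
    · simp [mulVec_diagonal, h k hk]
  conv_lhs => rw [hA.spectral_theorem, conjStarAlgAut_apply, ← mulVec_mulVec, ← mulVec_mulVec]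
  rw [hdiag, mulVec_smul, mulVec_mulVec, Unitary.mul_star_self_of_mem hA.eigenvectorUnitary.2,
    one_mulVec]

theorem Matrix.IsHermitian.mulVec_eq_smul_of_exp_mul_exp_mulVec_eq {A B : Matrix n n ℂ}
    (hA : A.IsHermitian) (hB : B.IsHermitian) {a b α β : ℝ} (hα : 0 ≤ α) (hβ : 0 ≤ β)
    (hαβ : α + β < 2 * π) (hμ : ∀ k, hA.eigenvalues k ∈ Set.Icc (a - α) a)
    (hν : ∀ k, hB.eigenvalues k ∈ Set.Icc (b - β) b) {v : n → ℂ}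
    (hv : (NormedSpace.exp (I • A) * NormedSpace.exp (I • B)) *ᵥ v
      = Complex.exp ((a + b : ℝ) * I) • v) :
    A *ᵥ v = (a : ℂ) • v ∧ B *ᵥ v = (b : ℂ) • v := by
  set p : n → ℝ := fun k ↦ normSq ((star (hA.eigenvectorUnitary : Matrix n n ℂ) *ᵥ v) k)
  set q : n → ℝ := fun k ↦ normSq ((star (hB.eigenvectorUnitary : Matrix n n ℂ) *ᵥ v) k)
  have hpq : ∑ k, p k = ∑ k, q k := by
    have hp := star_dotProduct_conjStarAlgAut_diagonal_mulVec hA.eigenvectorUnitary (fun _ ↦ 1) v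
    have hq := star_dotProduct_conjStarAlgAut_diagonal_mulVec hB.eigenvectorUnitary (fun _ ↦ 1) v
    simp only [diagonal_one, map_one, one_mulVec, mul_one] at hp hq
    apply Complex.ofReal_injective
    push_cast
    rw [← hp, hq]
  have hBv : NormedSpace.exp (I • B) *ᵥ v
      = Complex.exp ((a + b : ℝ) * I) • (NormedSpace.exp ((-I) • A) *ᵥ v) := by
    have hinv : NormedSpace.exp ((-I) • A) * NormedSpace.exp (I • A) = 1 := by
      rw [← exp_add_of_commute _ _ (((Commute.refl A).smul_left _).smul_right _), neg_smul,
        neg_add_cancel, NormedSpace.exp_zero]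
    rw [← one_mulVec (NormedSpace.exp (I • B) *ᵥ v), ← hinv, ← mulVec_mulVec,
      mulVec_mulVec v, hv, mulVec_smul]
  have hsum : ∑ k, (p k : ℂ) * Complex.exp ((a + b - hA.eigenvalues k : ℝ) * I)
      = ∑ k, (q k : ℂ) * Complex.exp (hB.eigenvalues k * I) := by
    have h := congrArg (star v ⬝ᵥ ·) hBv
    simp only [dotProduct_smul, hA.exp_smul, hB.exp_smul,
      star_dotProduct_conjStarAlgAut_diagonal_mulVec, Finset.mul_sum, smul_eq_mul] at h
    rw [h]
    refine Finset.sum_congr rfl fun k _ ↦ ?_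
    rw [mul_left_comm, ← Complex.exp_add]
    congr 2
    push_cast
    ring
  obtain ⟨hp, hq⟩ := eq_of_sum_exp_eq_sum_exp (θ := b) hα hβ hαβ (fun k ↦ Complex.normSq_nonneg _)
    (fun k ↦ Complex.normSq_nonneg _) hpq
    (fun k ↦ ⟨by linarith [(hμ k).2], by linarith [(hμ k).1]⟩) hν hsum
  refine ⟨hA.mulVec_eq_smul_of_eigenvalues_eq fun k hk ↦ ?_,
    hB.mulVec_eq_smul_of_eigenvalues_eq fun k hk ↦ hq k (Complex.normSq_pos.2 hk).ne'⟩
  linarith [hp k (Complex.normSq_pos.2 hk).ne']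

end Hermitian

section Block

variable {m : ℕ}

def finSuccSumEquiv (i₀ : Fin (m + 1)) : Fin (m + 1) ≃ Fin m ⊕ Unit :=
  (finSuccEquiv' i₀).trans (Equiv.optionEquivSumPUnit (Fin m))

@[simp] lemma finSuccSumEquiv_self (i₀ : Fin (m + 1)) : finSuccSumEquiv i₀ i₀ = Sum.inr () := by
  simp [finSuccSumEquiv]

@[simp] lemma finSuccSumEquiv_succAbove (i₀ : Fin (m + 1)) (j : Fin m) :
    finSuccSumEquiv i₀ (i₀.succAbove j) = Sum.inl j := by
  simp [finSuccSumEquiv]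

def blockAt (i₀ : Fin (m + 1)) (c : ℂ) (B : Mat m) : Mat (m + 1) :=
  reindex (finSuccSumEquiv i₀).symm (finSuccSumEquiv i₀).symm
    (fromBlocks B 0 0 (diagonal fun _ : Unit ↦ c))

@[simp] lemma submatrix_succAbove_blockAt (i₀ : Fin (m + 1)) (c : ℂ) (B : Mat m) :
    (blockAt i₀ c B).submatrix i₀.succAbove i₀.succAbove = B := by
  ext i j
  simp [blockAt]

lemma blockAt_mul (i₀ : Fin (m + 1)) (a b : ℂ) (A B : Mat m) :
    blockAt i₀ a A * blockAt i₀ b B = blockAt i₀ (a * b) (A * B) := by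
  simp [blockAt, submatrix_mul_equiv, fromBlocks_multiply]

lemma smul_blockAt (i₀ : Fin (m + 1)) (t c : ℂ) (B : Mat m) :
    t • blockAt i₀ c B = blockAt i₀ (t * c) (t • B) := by
  ext i j
  cases i using Fin.succAboveCases i₀ <;> cases j using Fin.succAboveCases i₀ <;> simp [blockAt]

def blockAtHom (i₀ : Fin (m + 1)) : Mat m × ℂ →+* Mat (m + 1) where
  toFun x := blockAt i₀ x.2 x.1
  map_one' := by simp [blockAt, fromBlocks_one]
  map_mul' x y := (blockAt_mul i₀ _ _ _ _).symm
  map_zero' := by simp [blockAt]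
  map_add' x y := by
    change _ = (fromBlocks x.1 0 0 _ + fromBlocks y.1 0 0 _).submatrix _ _
    rw [fromBlocks_add, diagonal_add, add_zero, add_zero]
    rfl

lemma continuous_blockAtHom (i₀ : Fin (m + 1)) : Continuous (blockAtHom i₀) := by
  change Continuous fun x : Mat m × ℂ ↦ blockAt i₀ x.2 x.1
  unfold blockAt
  fun_prop

section
-- any submultiplicative norm will do: it is only needed to apply `NormedSpace.map_exp`
attribute [local instance] Matrix.linftyOpNormedRing Matrix.linftyOpNormedAlgebra

lemma exp_blockAt (i₀ : Fin (m + 1)) (c : ℂ) (B : Mat m) :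
    NormedSpace.exp (blockAt i₀ c B) = blockAt i₀ (Complex.exp c) (NormedSpace.exp B) := by
  have h := NormedSpace.map_exp (blockAtHom i₀) (continuous_blockAtHom i₀) (B, c)
  have hprod : NormedSpace.exp (B, c) = (NormedSpace.exp B, NormedSpace.exp c) :=
    Prod.ext (Prod.fst_exp _) (Prod.snd_exp _)
  exact h.symm.trans (by erw [hprod]; simp [blockAtHom, Complex.exp_eq_exp_ℂ])

end

open Polynomial in
lemma charpoly_blockAt (i₀ : Fin (m + 1)) (c : ℂ) (B : Mat m) :
    (blockAt i₀ c B).charpoly = (X - C c) * B.charpoly := by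
  rw [blockAt, charpoly_reindex]
  simp [charpoly_diagonal, mul_comm]

lemma Matrix.IsHermitian.eq_blockAt_of_mulVec_single {A : Mat (m + 1)} (hA : A.IsHermitian)
    {i₀ : Fin (m + 1)} {c : ℂ} (h : A *ᵥ Pi.single i₀ 1 = c • Pi.single i₀ 1) :
    A = blockAt i₀ c (A.submatrix i₀.succAbove i₀.succAbove) := by
  have hcol : ∀ i, A i i₀ = c * (Pi.single i₀ 1 : Fin (m + 1) → ℂ) i := fun i ↦ by
    simpa [mulVec_single_one] using congrFun h i
  ext i j
  refine Fin.succAboveCases i₀ ?_ (fun i ↦ ?_) i <;> refine Fin.succAboveCases i₀ ?_ (fun j ↦ ?_) j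
  · simpa [blockAt] using hcol i₀
  · simpa [blockAt, ← hA.apply i₀, Fin.succAbove_ne] using hcol (i₀.succAbove j)
  · simpa [blockAt, Fin.succAbove_ne] using hcol (i₀.succAbove i)
  · simp [blockAt]

lemma diagonal_eq_blockAt (i₀ : Fin (m + 1)) (d : Fin (m + 1) → ℂ) :
    diagonal d = blockAt i₀ (d i₀) (diagonal (d ∘ i₀.succAbove)) := by
  ext i j
  cases i using Fin.succAboveCases i₀ <;> cases j using Fin.succAboveCases i₀ <;>
    simp [blockAt, diagonal_apply, Fin.succAbove_ne, (Fin.succAbove_ne _ _).symm]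

end Block

open Polynomial in
lemma Matrix.IsHermitian.exists_eigenvalues_eq_of_charpoly_eq {n : Type*} [Fintype n]
    [DecidableEq n] {A : Matrix n n ℂ} (hA : A.IsHermitian) {f : n → ℝ}
    (h : A.charpoly = ∏ i, (X - C (f i : ℂ))) (k : n) : ∃ i, hA.eigenvalues k = f i := by
  have hroot : A.charpoly.eval (hA.eigenvalues k : ℂ) = 0 := by
    rw [hA.charpoly_eq, eval_prod]
    exact Finset.prod_eq_zero (Finset.mem_univ k) (by simp)
  rw [h, eval_prod, Finset.prod_eq_zero_iff] at hroot
  obtain ⟨i, -, hi⟩ := hroot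
  exact ⟨i, by simpa [sub_eq_zero] using hi⟩

open Polynomial in
lemma Matrix.IsHermitian.eigenvalues_mem_Icc_of_charpoly_eq {n : Type*} [Fintype n]
    [DecidableEq n] {A : Matrix n n ℂ} (hA : A.IsHermitian) {t μ : ℝ} (ht : 0 ≤ t) {d : n → ℝ}
    (hd : ∀ j, d j ∈ Set.Ioc (-π) μ) (h : A.charpoly = ∏ i, (X - C ((t * d i : ℝ) : ℂ))) (k : n) :
    hA.eigenvalues k ∈ Set.Icc (t * μ - t * (μ + π)) (t * μ) := by
  obtain ⟨j, hj⟩ := hA.exists_eigenvalues_eq_of_charpoly_eq h k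
  rw [hj]
  constructor
  · nlinarith [mul_le_mul_of_nonneg_left (hd j).1.le ht]
  · exact mul_le_mul_of_nonneg_left (hd j).2 ht

lemma exp_smul_diagonal_mulVec_single {n : Type*} [Fintype n] [DecidableEq n] (d : n → ℝ)
    (i : n) :
    NormedSpace.exp (I • diagonal fun j ↦ (d j : ℂ)) *ᵥ Pi.single i 1
      = Complex.exp (d i * I) • Pi.single i 1 := by
  rw [← diagonal_smul, exp_diagonal, diagonal_mulVec_single]
  ext j
  simp [Pi.single_apply, ← Complex.exp_eq_exp_ℂ, mul_comm]

open Polynomial in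
lemma charpoly_submatrix_succAbove_of_eq_blockAt {m : ℕ} {A : Mat (m + 1)} {i₀ : Fin (m + 1)}
    {f : Fin (m + 1) → ℂ} (hA : A = blockAt i₀ (f i₀) (A.submatrix i₀.succAbove i₀.succAbove))
    (h : A.charpoly = ∏ i, (X - C (f i))) :
    (A.submatrix i₀.succAbove i₀.succAbove).charpoly = ∏ j, (X - C (f (i₀.succAbove j))) := by
  rw [hA, charpoly_blockAt, Fin.prod_univ_succAbove _ i₀] at h
  exact mul_left_cancel₀ (X_sub_C_ne_zero _) h

open Polynomial in
theorem eq_diagonal_of_exp_mul_exp_eq_exp_diagonal {r : ℝ} (hr : r ∈ Set.Icc (0 : ℝ) 1) {m : ℕ}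
    (d : Fin m → ℝ) (hd : ∀ i, |d i| < π) {A B : Mat m} (hA : A.IsHermitian)
    (hB : B.IsHermitian)
    (hexp : NormedSpace.exp (I • A) * NormedSpace.exp (I • B)
      = NormedSpace.exp (I • diagonal fun i ↦ (d i : ℂ)))
    (hA_char : A.charpoly = ∏ i, (X - C ((r * d i : ℝ) : ℂ)))
    (hB_char : B.charpoly = ∏ i, (X - C (((1 - r) * d i : ℝ) : ℂ))) :
    A = diagonal (fun i ↦ ((r * d i : ℝ) : ℂ))
      ∧ B = diagonal (fun i ↦ (((1 - r) * d i : ℝ) : ℂ)) := by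
  induction m with
  | zero => exact ⟨Subsingleton.elim _ _, Subsingleton.elim _ _⟩
  | succ m ih =>
    obtain ⟨i₀, hi₀⟩ := Finite.exists_max d
    have hd' : ∀ j, d j ∈ Set.Ioc (-π) (d i₀) := fun j ↦ ⟨(abs_lt.mp (hd j)).1, hi₀ j⟩
    have he : (NormedSpace.exp (I • A) * NormedSpace.exp (I • B)) *ᵥ Pi.single i₀ 1
        = Complex.exp ((r * d i₀ + (1 - r) * d i₀ : ℝ) * I) • Pi.single i₀ 1 := by
      rw [show r * d i₀ + (1 - r) * d i₀ = d i₀ by ring, hexp]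
      exact exp_smul_diagonal_mulVec_single d i₀
    have hpos : 0 ≤ d i₀ + π := by linarith [(hd' i₀).1]
    obtain ⟨hAe, hBe⟩ := hA.mulVec_eq_smul_of_exp_mul_exp_mulVec_eq hB (mul_nonneg hr.1 hpos)
      (mul_nonneg (sub_nonneg.2 hr.2) hpos) (by nlinarith [abs_lt.mp (hd i₀)])
      (hA.eigenvalues_mem_Icc_of_charpoly_eq hr.1 hd' hA_char)
      (hB.eigenvalues_mem_Icc_of_charpoly_eq (sub_nonneg.2 hr.2) hd' hB_char) he
    have hA' := hA.eq_blockAt_of_mulVec_single hAe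
    have hB' := hB.eq_blockAt_of_mulVec_single hBe
    have hexp' : NormedSpace.exp (I • A.submatrix i₀.succAbove i₀.succAbove)
          * NormedSpace.exp (I • B.submatrix i₀.succAbove i₀.succAbove)
        = NormedSpace.exp (I • diagonal fun j ↦ (d (i₀.succAbove j) : ℂ)) := by
      have h := congrArg (·.submatrix i₀.succAbove i₀.succAbove) hexp
      rw [hA', hB', diagonal_eq_blockAt i₀] at h
      simp only [smul_blockAt, exp_blockAt, blockAt_mul, submatrix_succAbove_blockAt] at h
      exact h
    obtain ⟨hA₀, hB₀⟩ := ih (d ∘ i₀.succAbove) (fun j ↦ hd _) (hA.submatrix _) (hB.submatrix _)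
      hexp'
      (charpoly_submatrix_succAbove_of_eq_blockAt (f := fun i ↦ ((r * d i : ℝ) : ℂ)) hA' hA_char)
      (charpoly_submatrix_succAbove_of_eq_blockAt (f := fun i ↦ (((1 - r) * d i : ℝ) : ℂ)) hB'
        hB_char)
    constructor
    · rw [hA', hA₀, diagonal_eq_blockAt i₀ (fun i ↦ ((r * d i : ℝ) : ℂ))]
      rfl
    · rw [hB', hB₀, diagonal_eq_blockAt i₀ (fun i ↦ (((1 - r) * d i : ℝ) : ℂ))]
      rfl

lemma abs_eigenvalues_le_specNorm {n : ℕ} {A : Mat n} (hA : A.IsHermitian) (i : Fin n) :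
    |hA.eigenvalues i| ≤ specNorm A := by
  have hAb : toEuclideanCLM (𝕜 := ℂ) (n := Fin n) A (hA.eigenvectorBasis i)
      = hA.eigenvalues i • hA.eigenvectorBasis i := by
    apply WithLp.ofLp_injective 2
    rw [ofLp_toEuclideanCLM, WithLp.ofLp_smul]
    exact hA.mulVec_eigenvectorBasis i
  have h := (toEuclideanCLM (𝕜 := ℂ) (n := Fin n) A).le_opNorm (hA.eigenvectorBasis i)
  rwa [hAb, norm_smul, Real.norm_eq_abs, hA.eigenvectorBasis.orthonormal.1 i, mul_one,
    mul_one] at h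

lemma prod_eigsDesc {M : Type*} [CommMonoid M] {n : ℕ} {A : Mat n} (hA : A.IsHermitian)
    (g : ℝ → M) : ∏ k, g (eigsDesc hA k) = ∏ i, g (hA.eigenvalues i) :=
  Equiv.prod_comp (Fin.revPerm.trans (Tuple.sort hA.eigenvalues)) (g ∘ hA.eigenvalues)

open Polynomial in
lemma charpoly_eq_prod_of_eigsDesc_eq {n : ℕ} {A B : Mat n} (hA : A.IsHermitian)
    (hB : B.IsHermitian) {t : ℝ} (h : ∀ k, eigsDesc hA k = t * eigsDesc hB k) :
    A.charpoly = ∏ i, (X - C ((t * hB.eigenvalues i : ℝ) : ℂ)) :=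
  calc A.charpoly = ∏ i, (X - C (hA.eigenvalues i : ℂ)) := hA.charpoly_eq
    _ = ∏ k, (X - C ((t * eigsDesc hB k : ℝ) : ℂ)) := by
      simp_rw [← h]
      exact (prod_eigsDesc hA fun x ↦ X - C (x : ℂ)).symm
    _ = _ := prod_eigsDesc hB fun x ↦ X - C ((t * x : ℝ) : ℂ)

open Polynomial Unitary in
theorem eq_smul_of_exp_mul_exp_eq_exp {n : ℕ} {A B Z : Mat n} (hA : A.IsHermitian)
    (hB : B.IsHermitian) (hZ : Z.IsHermitian) (hZπ : ∀ i, |hZ.eigenvalues i| < π) {r : ℝ}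
    (hr : r ∈ Set.Icc (0 : ℝ) 1)
    (hexp : NormedSpace.exp (I • A) * NormedSpace.exp (I • B) = NormedSpace.exp (I • Z))
    (hA_char : A.charpoly = ∏ i, (X - C ((r * hZ.eigenvalues i : ℝ) : ℂ)))
    (hB_char : B.charpoly = ∏ i, (X - C (((1 - r) * hZ.eigenvalues i : ℝ) : ℂ))) :
    A = r • Z ∧ B = (1 - r) • Z := by
  set φ := conjStarAlgAut ℂ (Mat n) hZ.eigenvectorUnitary
  have hexp_φ : ∀ M, NormedSpace.exp (I • φ M) = φ (NormedSpace.exp (I • M)) := fun M ↦ by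
    rw [← map_smul, exp_conjStarAlgAut]
  have hherm : ∀ {M : Mat n}, M.IsHermitian → (φ.symm M).IsHermitian :=
    fun hM ↦ IsSelfAdjoint.map hM φ.symm
  have hchar : ∀ M, (φ.symm M).charpoly = M.charpoly := fun M ↦ by
    rw [conjStarAlgAut_symm, conjStarAlgAut_apply, charpoly_mul_comm, ← mul_assoc,
      star_mul_self_of_mem (star hZ.eigenvectorUnitary).2, one_mul]
  have hsmul : ∀ t : ℝ, diagonal (fun i ↦ ((t * hZ.eigenvalues i : ℝ) : ℂ))
      = (t : ℂ) • diagonal (RCLike.ofReal ∘ hZ.eigenvalues) := fun t ↦ by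
    rw [← diagonal_smul]
    congr 1
    funext i
    simp
  obtain ⟨hA', hB'⟩ := eq_diagonal_of_exp_mul_exp_eq_exp_diagonal hr hZ.eigenvalues hZπ
    (hherm hA) (hherm hB)
    (EquivLike.injective φ (by
      rw [map_mul, ← hexp_φ, ← hexp_φ, φ.apply_symm_apply, φ.apply_symm_apply, hexp, ← hexp_φ]
      exact congrArg (fun M ↦ NormedSpace.exp (I • M)) hZ.spectral_theorem))
    ((hchar A).trans hA_char) ((hchar B).trans hB_char)
  rw [← φ.apply_symm_apply A, ← φ.apply_symm_apply B, hA', hB', hsmul, hsmul, map_smul, map_smul,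
    ← hZ.spectral_theorem, Complex.coe_smul, Complex.coe_smul]
  exact ⟨rfl, rfl⟩

theorem stmt9 {n : ℕ} (X Y Z : Mat n) (hX : X.IsHermitian) (hY : Y.IsHermitian)
    (hZ : Z.IsHermitian)
    (hexp : NormedSpace.exp (Complex.I • Z)
      = NormedSpace.exp (Complex.I • X) * NormedSpace.exp (Complex.I • Y))
    (hZn : specNorm Z < Real.pi) (r : ℝ) (hr : r ∈ Set.Icc (0 : ℝ) 1)
    (hXe : ∀ k, eigsDesc hX k = r * eigsDesc hZ k)
    (hYe : ∀ k, eigsDesc hY k = (1 - r) * eigsDesc hZ k) :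
    X = r • Z ∧ Y = (1 - r) • Z :=
  eq_smul_of_exp_mul_exp_eq_exp hX hY hZ (fun i ↦ (abs_eigenvalues_le_specNorm hZ i).trans_lt hZn)
    hr hexp.symm (charpoly_eq_prod_of_eigsDesc_eq hX hZ hXe)
    (charpoly_eq_prod_of_eigsDesc_eq hY hZ hYe)

end
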